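/- arXiv:1605.07575 — 2 statements merged into one kernel-verified Lean document; each statement's English description precedes it below -/
import Mathlib

section
/- Let (h_n)_{n∈ℕ} be a sequence of nonnegative reals and (p_n)_{n∈ℕ} a sequence in [0,1]. Suppose that for some k ∈ ℕ the following hold for all n ≥ k: p_{n+1} ≤ 100·l_n·(p_n² + h_n) and 100·(l_n^{-1} + l_n^{7}·h_n) ≤ 1. If p_k ≤ l_k^{-4}, then p_n ≤ l_n^{-4} for all n ≥ k. -/
/-- The sequence of scales: `l 0 = 10^100`, `l (k+1) = ⌊l k ^ (1/2)⌋ * l k`. -/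
def scaleL : ℕ → ℕ
  | 0 => 10 ^ 100
  | k + 1 => Nat.sqrt (scaleL k) * scaleL k

/-!
One step of the recursion improves `p n ≤ l n⁻⁴` to `p (n+1) ≤ l n⁻⁶`: the quadratic term
contributes `100 l n⁻⁷` and the error term at most `l n⁻⁶ (1 - 100 l n⁻¹)`. Since
`l (n+1) ≤ l n ^ (3/2)`, this is at most `l (n+1)⁻⁴`, and induction on `n` closes the argument.
-/

lemma scaleL_pos (n : ℕ) : 0 < scaleL n := by
  induction n with
  | zero => simp [scaleL]
  | succ n ih => exact Nat.mul_pos (Nat.sqrt_pos.mpr ih) ih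

lemma scaleL_succ_pow_four_le (n : ℕ) : scaleL (n + 1) ^ 4 ≤ scaleL n ^ 6 :=
  calc scaleL (n + 1) ^ 4 = (Nat.sqrt (scaleL n) ^ 2) ^ 2 * scaleL n ^ 4 := by
        rw [scaleL]; ring
    _ ≤ scaleL n ^ 2 * scaleL n ^ 4 := by gcongr; exact Nat.sqrt_le' _
    _ = scaleL n ^ 6 := by ring

lemma le_inv_pow_six_of_le_mul_sq_add {L p p' h : ℝ} (hL : 0 < L) (hp : 0 ≤ p)
    (hpL : p ≤ L⁻¹ ^ 4) (hrec : p' ≤ 100 * L * (p ^ 2 + h))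
    (hsmall : 100 * (L⁻¹ + L ^ 7 * h) ≤ 1) : p' ≤ L⁻¹ ^ 6 := by
  have hsq : p ^ 2 ≤ (L⁻¹ ^ 4) ^ 2 := pow_le_pow_left₀ hp hpL 2
  have herr : L⁻¹ ^ 6 * (100 * L ^ 7 * h) ≤ L⁻¹ ^ 6 * (1 - 100 * L⁻¹) := by
    gcongr; linarith
  calc p' ≤ 100 * L * (p ^ 2 + h) := hrec
    _ ≤ 100 * L * ((L⁻¹ ^ 4) ^ 2 + h) := by gcongr
    _ = 100 * L⁻¹ ^ 7 + L⁻¹ ^ 6 * (100 * L ^ 7 * h) := by field_simp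
    _ ≤ 100 * L⁻¹ ^ 7 + L⁻¹ ^ 6 * (1 - 100 * L⁻¹) := by gcongr
    _ = L⁻¹ ^ 6 := by ring

lemma inv_scaleL_pow_six_le (n : ℕ) :
    (scaleL n : ℝ)⁻¹ ^ 6 ≤ (scaleL (n + 1) : ℝ)⁻¹ ^ 4 := by
  have hpos : (0 : ℝ) < scaleL (n + 1) := by exact_mod_cast scaleL_pos (n + 1)
  rw [inv_pow, inv_pow]
  exact inv_anti₀ (by positivity) (by exact_mod_cast scaleL_succ_pow_four_le n)

theorem stmt_2_general (h p : ℕ → ℝ) (hp : ∀ n, p n ∈ Set.Icc (0 : ℝ) 1)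
    (k : ℕ)
    (hrec : ∀ n, k ≤ n → p (n + 1) ≤ 100 * (scaleL n : ℝ) * ((p n) ^ 2 + h n))
    (hsmall : ∀ n, k ≤ n → 100 * ((scaleL n : ℝ)⁻¹ + (scaleL n : ℝ) ^ 7 * h n) ≤ 1)
    (hk : p k ≤ (scaleL k : ℝ)⁻¹ ^ 4) :
    ∀ n, k ≤ n → p n ≤ (scaleL n : ℝ)⁻¹ ^ 4 := by
  intro n hn
  induction n, hn using Nat.le_induction with
  | base => exact hk
  | succ n hn ih =>
    have hL : (0 : ℝ) < scaleL n := by exact_mod_cast scaleL_pos n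
    exact (le_inv_pow_six_of_le_mul_sq_add hL (hp n).1 ih (hrec n hn) (hsmall n hn)).trans
      (inv_scaleL_pow_six_le n)

/-- If `p (n+1) ≤ 100 * l n * (p n ^ 2 + h n)` and `100 * (l n⁻¹ + l n ^ 7 * h n) ≤ 1`
for all `n ≥ k`, and `p k ≤ l k ^ (-4)`, then `p n ≤ l n ^ (-4)` for all `n ≥ k`. -/
theorem stmt_2 (h p : ℕ → ℝ) (hh : ∀ n, 0 ≤ h n) (hp : ∀ n, p n ∈ Set.Icc (0 : ℝ) 1)
    (k : ℕ)
    (hrec : ∀ n, k ≤ n → p (n + 1) ≤ 100 * (scaleL n : ℝ) * ((p n) ^ 2 + h n))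
    (hsmall : ∀ n, k ≤ n → 100 * ((scaleL n : ℝ)⁻¹ + (scaleL n : ℝ) ^ 7 * h n) ≤ 1)
    (hk : p k ≤ (scaleL k : ℝ)⁻¹ ^ 4) :
    ∀ n, k ≤ n → p n ≤ (scaleL n : ℝ)⁻¹ ^ 4 :=
  stmt_2_general h p hp k hrec hsmall hk
end

section
/- There exist constants c > 0 and c' > 0 such that for every s > 0 and every t ≥ 0, if X is a random variable with Poisson distribution of parameter s, then Σ_{k=0}^{∞} P[X ≥ 2s + t + k] ≤ c·e^{−c'·t}. -/
open MeasureTheory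
open scoped ENNReal NNReal

/-- `X` has Poisson distribution with parameter `lam` under `P`. -/
def IsPoisson {Ω : Type*} [MeasurableSpace Ω] (P : Measure Ω) (lam : ℝ) (X : Ω → ℕ) : Prop :=
  ∀ k : ℕ, P {ω | X ω = k} = ENNReal.ofReal (Real.exp (-lam) * lam ^ k / (Nat.factorial k))

lemma real_exp_tsum (x : ℝ) : ∑' n : ℕ, x ^ n / n.factorial = Real.exp x := by
  rw [Real.exp_eq_exp_ℝ, NormedSpace.exp_eq_tsum_div]

lemma poisson_tail {Ω : Type} [MeasurableSpace Ω] (P : Measure Ω) {s : ℝ} (hs : 0 < s)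
    (X : Ω → ℕ) (hX : IsPoisson P s X) (m : ℝ) :
    P {ω | m ≤ (X ω : ℝ)} ≤ ENNReal.ofReal (Real.exp (s - m * Real.log 2)) := by
  have hsub : {ω | m ≤ (X ω : ℝ)} ⊆ ⋃ n : ℕ, {ω | X ω = n ∧ m ≤ (n : ℝ)} := fun ω hω =>
    Set.mem_iUnion.2 ⟨X ω, rfl, hω⟩
  have hC : (0:ℝ) ≤ Real.exp (-(m * Real.log 2)) := (Real.exp_pos _).le
  calc P {ω | m ≤ (X ω : ℝ)}
      ≤ ∑' n : ℕ, P {ω | X ω = n ∧ m ≤ (n : ℝ)} :=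
        (measure_mono hsub).trans (measure_iUnion_le _)
    _ ≤ ∑' n : ℕ, ENNReal.ofReal
          (Real.exp (-s) * (2 * s) ^ n / n.factorial * Real.exp (-(m * Real.log 2))) := by
        apply ENNReal.tsum_le_tsum
        intro n
        by_cases h : m ≤ (n : ℝ)
        · have hset : {ω | X ω = n ∧ m ≤ (n:ℝ)} = {ω | X ω = n} := by ext ω; simp [h]
          rw [hset, hX n]
          apply ENNReal.ofReal_le_ofReal
          have h2 : Real.exp (-(m * Real.log 2)) * 2 ^ n ≥ 1 := by
            have : (2:ℝ) ^ n = Real.exp (n * Real.log 2) := by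
              rw [Real.exp_nat_mul, Real.exp_log (by norm_num)]
            rw [this, ← Real.exp_add]
            have : (0:ℝ) ≤ -(m * Real.log 2) + n * Real.log 2 := by
              have hlog : (0:ℝ) ≤ Real.log 2 := Real.log_nonneg (by norm_num)
              nlinarith
            simpa using Real.one_le_exp this
          have hpos : (0:ℝ) < Real.exp (-s) * s ^ n / n.factorial := by
            positivity
          have : Real.exp (-s) * (2 * s) ^ n / n.factorial * Real.exp (-(m * Real.log 2))
              = Real.exp (-s) * s ^ n / n.factorial * (Real.exp (-(m * Real.log 2)) * 2 ^ n) := by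
            rw [mul_pow]; ring
          rw [this]
          nlinarith
        · have hset : {ω | X ω = n ∧ m ≤ (n:ℝ)} = ∅ := by ext ω; simp [h]
          simp [hset]
    _ = ENNReal.ofReal (Real.exp (s - m * Real.log 2)) := by
        have hsum : Summable (fun n : ℕ => Real.exp (-s) * (2 * s) ^ n / n.factorial) := by
          simpa [mul_div_assoc] using
            (Real.summable_pow_div_factorial (2 * s)).mul_left (Real.exp (-s))
        have h1 : ∀ n : ℕ,
            ENNReal.ofReal (Real.exp (-s) * (2 * s) ^ n / n.factorial * Real.exp (-(m * Real.log 2)))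
            = ENNReal.ofReal (Real.exp (-s) * (2 * s) ^ n / n.factorial)
              * ENNReal.ofReal (Real.exp (-(m * Real.log 2))) := fun n =>
          ENNReal.ofReal_mul (by positivity)
        simp_rw [h1]
        rw [ENNReal.tsum_mul_right, ← ENNReal.ofReal_tsum_of_nonneg (fun n => by positivity) hsum]
        have : ∑' n : ℕ, Real.exp (-s) * (2 * s) ^ n / n.factorial = Real.exp s := by
          simp_rw [mul_div_assoc]
          rw [tsum_mul_left, real_exp_tsum, ← Real.exp_add]
          ring_nf
        rw [this, ← ENNReal.ofReal_mul (Real.exp_pos _).le, ← Real.exp_add]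
        ring_nf

/-- There are constants `c > 0` and `c' > 0` such that for every `s > 0`, `t ≥ 0` and every
Poisson(`s`) random variable `X`, one has `∑_{k=0}^∞ P[X ≥ 2s + t + k] ≤ c * exp (-c' t)`. -/
theorem stmt_17 :
    ∃ c : ℝ, 0 < c ∧ ∃ c' : ℝ, 0 < c' ∧
      ∀ (s t : ℝ), 0 < s → 0 ≤ t →
        ∀ {Ω : Type} [MeasurableSpace Ω] (P : Measure Ω), IsProbabilityMeasure P →
          ∀ X : Ω → ℕ, IsPoisson P s X →
            (∑' k : ℕ, P {ω | 2 * s + t + (k : ℝ) ≤ (X ω : ℝ)})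
              ≤ ENNReal.ofReal (c * Real.exp (-c' * t)) := by
  refine ⟨2, by norm_num, Real.log 2, Real.log_pos (by norm_num), ?_⟩
  intro s t hs ht Ω _ P _ X hX
  have hlog : (1:ℝ)/2 < Real.log 2 := by
    have := Real.log_two_gt_d9; linarith
  calc (∑' k : ℕ, P {ω | 2 * s + t + (k : ℝ) ≤ (X ω : ℝ)})
      ≤ ∑' k : ℕ, ENNReal.ofReal (Real.exp (-(t * Real.log 2)) * ((1:ℝ)/2) ^ k) := by
        apply ENNReal.tsum_le_tsum
        intro k
        refine (poisson_tail P hs X hX _).trans (ENNReal.ofReal_le_ofReal ?_)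
        have hhalf : ((1:ℝ)/2) ^ k = Real.exp (-(k * Real.log 2)) := by
          rw [Real.exp_neg, Real.exp_nat_mul, Real.exp_log (by norm_num)]
          simp [one_div]
        rw [hhalf, ← Real.exp_add]
        apply Real.exp_le_exp.2
        have hk : (0:ℝ) ≤ (k:ℝ) := Nat.cast_nonneg k
        nlinarith
    _ = ENNReal.ofReal (Real.exp (-(t * Real.log 2))) * ∑' k : ℕ, ((2:ℝ≥0∞)⁻¹) ^ k := by
        have hhalf2 : ENNReal.ofReal ((1:ℝ)/2) = (2:ℝ≥0∞)⁻¹ := by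
          rw [one_div, ENNReal.ofReal_inv_of_pos (by norm_num)]
          norm_num
        have hterm : ∀ k : ℕ, ENNReal.ofReal (Real.exp (-(t * Real.log 2)) * ((1:ℝ)/2) ^ k)
            = ENNReal.ofReal (Real.exp (-(t * Real.log 2))) * ((2:ℝ≥0∞)⁻¹) ^ k := by
          intro k
          rw [ENNReal.ofReal_mul (Real.exp_pos _).le,
            ENNReal.ofReal_pow (by norm_num : (0:ℝ) ≤ 1/2), hhalf2]
        simp_rw [hterm]
        rw [ENNReal.tsum_mul_left]
    _ ≤ ENNReal.ofReal (2 * Real.exp (-Real.log 2 * t)) := by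
        rw [ENNReal.tsum_geometric, ENNReal.one_sub_inv_two, inv_inv]
        have h2 : (2:ℝ≥0∞) = ENNReal.ofReal 2 := by simp
        rw [h2, mul_comm, ← ENNReal.ofReal_mul (by norm_num)]
        apply ENNReal.ofReal_le_ofReal
        apply mul_le_mul_of_nonneg_left (le_of_eq ?_) (by norm_num)
        ring_nf
end
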